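/- Let K be a field and suppose n = 2k > 2. Then for every semilinear bijection l : V → V and every semilinear bijection s : V → Dual V (each over some automorphism of K) it is NOT the case that for all k-dimensional subspaces S, U of V: S and U are complementary if and only if l(S) and (s(U))° are complementary. -/

import Mathlib

open Module

variable (K V : Type*) [DivisionRing K] [AddCommGroup V] [Module K V]

/-- Two subspaces `P`, `T` are adjacent: `dim P = dim T = dim (P ⊓ T) + 1`. -/
def SubAdj (P T : Submodule K V) : Prop :=
  finrank K P = finrank K T ∧ finrank K P = finrank K ↥(P ⊓ T) + 1

/-- Two subspaces are complementary. -/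
def SubCompl (S U : Submodule K V) : Prop := S ⊓ U = ⊥ ∧ S ⊔ U = ⊤

/-- The set 𝒢 of pairs of complementary subspaces of dimensions `k` and `n - k`. -/
def GSet (n k : ℕ) : Set (Submodule K V × Submodule K V) :=
  {p | finrank K p.1 = k ∧ finrank K p.2 = n - k ∧ SubCompl K V p.1 p.2}

/-- Adjacency of pairs. -/
def PairAdj (p q : Submodule K V × Submodule K V) : Prop :=
  (p.1 = q.1 ∧ SubAdj K V p.2 q.2) ∨ (SubAdj K V p.1 q.1 ∧ p.2 = q.2)

/-- Closeness of pairs. -/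
def PairClose (p q : Submodule K V × Submodule K V) : Prop :=
  (p.1 = q.1 ∧ p.2 ≠ q.2) ∨ (p.1 ≠ q.1 ∧ p.2 = q.2)

/-! If complementarity of `S, U` were detected by `l(S), (s U)°`, then `l(B) ≤ (s B)°` for every
`k`-dimensional `B`: were `l b ∉ (s B)°` for some `b ∈ B`, a complement `A` of `(s B)°` through
`l b` would give a complement `l⁻¹(A)` of `B` containing `b ≠ 0`. As `k ≥ 2`, any two vectors
`b, u` lie in a common `k`-dimensional subspace, so `s(u)(l b) = 0` for all `u`; since `s` is onto
the dual, `l b = 0` for every `b`, contradicting injectivity of `l`. -/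

open Submodule

attribute [local instance] RingHomInvPair.of_ringEquiv RingHomInvPair.of_ringEquiv_symm

section

variable {K V} {W : Type*} [AddCommGroup W] [Module K W]

theorem subCompl_iff_isCompl {S U : Submodule K V} : SubCompl K V S U ↔ IsCompl S U := by
  rw [isCompl_iff, disjoint_iff, codisjoint_iff]
  rfl

theorem LinearEquiv.finrank_eq_of_ringEquiv {σ : K ≃+* K} (e : V ≃ₛₗ[(σ : K →+* K)] W) :
    finrank K V = finrank K W := by
  simpa [finrank] using congr_arg Cardinal.toNat
    (lift_rank_eq_of_equiv_equiv σ e.toAddEquiv σ.bijective fun c x => e.map_smulₛₗ c x)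

theorem LinearEquiv.finrank_map_eq_of_ringEquiv {σ : K ≃+* K} (e : V ≃ₛₗ[(σ : K →+* K)] W)
    (p : Submodule K V) : finrank K (p.map e.toLinearMap) = finrank K p :=
  (e.submoduleMap p).finrank_eq_of_ringEquiv.symm

theorem Submodule.exists_isCompl_mem {D : Submodule K V} {x : V} (hx : x ∉ D) :
    ∃ A : Submodule K V, IsCompl A D ∧ x ∈ A := by
  have hx0 : x ≠ 0 := by rintro rfl; exact hx D.zero_mem
  obtain ⟨A, hxA, hA⟩ := ((disjoint_span_singleton' hx0).2 hx).symm.exists_isCompl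
  exact ⟨A, hA, hxA (mem_span_singleton_self x)⟩

theorem Submodule.exists_le_finrank_eq [FiniteDimensional K V] (P : Submodule K V) {k : ℕ}
    (hPk : finrank K P ≤ k) (hk : k ≤ finrank K V) :
    ∃ B : Submodule K V, P ≤ B ∧ finrank K B = k := by
  induction k, hPk using Nat.le_induction with
  | base => exact ⟨P, le_rfl, rfl⟩
  | succ k _ ih =>
    obtain ⟨B, hPB, hB⟩ := ih (by omega)
    obtain ⟨v, hv⟩ := B.exists_of_finrank_lt (by omega)
    have hvB : v ∉ B := by simpa using hv 1 one_ne_zero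
    exact ⟨B ⊔ span K {v}, hPB.trans le_sup_left, by rw [finrank_sup_span_singleton hvB, hB]⟩

theorem Submodule.exists_finrank_eq_mem_mem [FiniteDimensional K V] {k : ℕ} (hk : 2 ≤ k)
    (hkV : k ≤ finrank K V) (x y : V) :
    ∃ B : Submodule K V, finrank K B = k ∧ x ∈ B ∧ y ∈ B := by
  have hxy : finrank K (span K {x, y}) ≤ k := by
    classical
    have h := finrank_span_finset_le_card (R := K) ({x, y} : Finset V)
    rw [Set.finrank, Finset.coe_pair] at h
    exact h.trans (Finset.card_le_two.trans hk)
  obtain ⟨B, hxyB, hB⟩ := (span K {x, y}).exists_le_finrank_eq hxy hkV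
  exact ⟨B, hB, hxyB (subset_span (by simp)), hxyB (subset_span (by simp))⟩

theorem LinearEquiv.map_le_of_isCompl_map_imp_disjoint [FiniteDimensional K W] {σ : K ≃+* K}
    (L : V ≃ₛₗ[(σ : K →+* K)] W) {B : Submodule K V} {D : Submodule K W}
    (H : ∀ S : Submodule K V, finrank K S + finrank K D = finrank K W →
      IsCompl (S.map L.toLinearMap) D → Disjoint S B) :
    B.map L.toLinearMap ≤ D := by
  rintro _ ⟨b, hb, rfl⟩
  by_contra hbD
  obtain ⟨A, hAD, hbA⟩ := exists_isCompl_mem hbD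
  have hA : (A.comap L.toLinearMap).map L.toLinearMap = A :=
    map_comap_eq_of_surjective L.surjective A
  have hdisj := H (A.comap L.toLinearMap)
    (by rw [← L.finrank_map_eq_of_ringEquiv, hA, finrank_add_eq_of_isCompl hAD]) (by rwa [hA])
  have hb0 : b = 0 := disjoint_def.1 hdisj b hbA hb
  exact hbD (by simp [hb0])

theorem Submodule.coe_dualCoannihilator_map {R M : Type*} [CommRing R] [AddCommGroup M]
    [Module R M] {τ : R →+* R} [RingHomSurjective τ] (s : M →ₛₗ[τ] Dual R M)
    (U : Submodule R M) :
    ((U.map s).dualCoannihilator : Set M) = {v | ∀ u ∈ U, s u v = 0} := by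
  ext v
  simp [mem_dualCoannihilator]

theorem Submodule.finrank_add_finrank_dualCoannihilator_map {K V : Type*} [Field K]
    [AddCommGroup V] [Module K V] [FiniteDimensional K V] {τ : K ≃+* K}
    (s : V ≃ₛₗ[(τ : K →+* K)] Dual K V) (U : Submodule K V) :
    finrank K U + finrank K (U.map s.toLinearMap).dualCoannihilator = finrank K V := by
  rw [← s.finrank_map_eq_of_ringEquiv, Subspace.finrank_add_finrank_dualCoannihilator_eq]

end

/-- For `n = 2k > 2` there are no semilinear bijections `l : V → V` and
`s : V → V*` such that `S, U` are complementary iff `l(S), (s(U))°` are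
complementary, for all `k`-dimensional `S`, `U`. -/
theorem no_mixed_pair_compatible_with_compl
    {K V : Type*} [Field K] [AddCommGroup V] [Module K V]
    [FiniteDimensional K V] {n k : ℕ} (hn : n = 2 * k) (hk : 2 ≤ k)
    (hV : finrank K V = n)
    (σ τ : K ≃+* K) (l : V → V) (s : V → Module.Dual K V)
    (hbl : Function.Bijective l) (hbs : Function.Bijective s)
    (haddl : ∀ x y : V, l (x + y) = l x + l y)
    (hadds : ∀ x y : V, s (x + y) = s x + s y)
    (hsmull : ∀ (c : K) (v : V), l (c • v) = σ c • l v)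
    (hsmuls : ∀ (c : K) (v : V), s (c • v) = τ c • s v) :
    ¬ (∀ S U S' U' : Submodule K V,
        finrank K S = k → finrank K U = k →
        (S' : Set V) = l '' (S : Set V) →
        (U' : Set V) = {v : V | ∀ u ∈ U, s u v = 0} →
        (SubCompl K V S U ↔ SubCompl K V S' U')) := by
  intro H
  let L : V ≃ₛₗ[(σ : K →+* K)] V := .ofBijective ⟨⟨l, haddl⟩, hsmull⟩ hbl
  let s' : V ≃ₛₗ[(τ : K →+* K)] Dual K V := .ofBijective ⟨⟨s, hadds⟩, hsmuls⟩ hbs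
  have hcompl (S U : Submodule K V) (hS : finrank K S = k) (hU : finrank K U = k) :
      IsCompl S U ↔ IsCompl (S.map L.toLinearMap) (U.map s'.toLinearMap).dualCoannihilator := by
    simpa only [subCompl_iff_isCompl] using
      H S U _ _ hS hU (map_coe ..) (coe_dualCoannihilator_map s'.toLinearMap U)
  have hle (B : Submodule K V) (hB : finrank K B = k) :
      B.map L.toLinearMap ≤ (B.map s'.toLinearMap).dualCoannihilator := by
    refine L.map_le_of_isCompl_map_imp_disjoint fun S hS hSB =>
      ((hcompl S B ?_ hB).2 hSB).disjoint
    have := finrank_add_finrank_dualCoannihilator_map s' B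
    omega
  have hLb (b u : V) : s u (l b) = 0 := by
    obtain ⟨B, hB, hbB, huB⟩ := exists_finrank_eq_mem_mem (K := K) hk (by omega) b u
    exact (mem_dualCoannihilator _).1 (hle B hB (mem_map_of_mem hbB)) _ (mem_map_of_mem huB)
  have : Nontrivial V := Module.nontrivial_of_finrank_pos (R := K) (by omega)
  obtain ⟨b, hb⟩ := exists_ne (0 : V)
  refine hb (L.map_eq_zero_iff.1 ((forall_dual_apply_eq_zero_iff K _).1 fun φ => ?_))
  obtain ⟨u, rfl⟩ := hbs.2 φ
  exact hLb b u
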